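/- arXiv:2501.05827 — 3 statements merged into one kernel-verified Lean document; each statement's English description precedes it below -/
import Mathlib

section
/- For the initial segment I_a ⊆ Q_n, the m-vector is monotone: m_0(I_a) ≤ m_1(I_a) ≤ ... ≤ m_{n-1}(I_a). -/
/-- The hypercube graph on `{0,1}^n`: two strings adjacent iff they differ in one coordinate. -/
def hypercube (n : ℕ) : SimpleGraph (Fin n → Bool) where
  Adj x y := (Finset.univ.filter (fun i => x i ≠ y i)).card = 1
  symm := ⟨by intro x y h; simpa [ne_comm] using h⟩
  loopless := ⟨by intro x h; simp at h⟩

/-- The integer represented by a string, position 0 most significant. -/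
def bval {n : ℕ} (x : Fin n → Bool) : ℕ :=
  ∑ i : Fin n, if x i then 2 ^ (n - 1 - i.val) else 0

/-- The initial segment of length `a` in the binary order on `{0,1}^n`. -/
def initSeg (n a : ℕ) : Finset (Fin n → Bool) :=
  Finset.univ.filter (fun x => bval x < a)

/-- `m_j(S)`: number of elements of `S` with a `1` in coordinate `j`. -/
def mCount {n : ℕ} (S : Finset (Fin n → Bool)) (j : Fin n) : ℕ :=
  (S.filter (fun x => x j = true)).card

/-- The hyperface `F_{j,k}` of strings whose `j`-th coordinate equals `k`. -/
def face (n : ℕ) (j : Fin n) (k : Bool) : Finset (Fin n → Bool) :=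
  Finset.univ.filter (fun x => x j = k)

/-!
Moving a `1` from a more significant position `i` to a less significant position `j ≥ i`
does not increase the value of a string, so `I_a` is closed under this `(i, j)`-compression.
For a set closed under it, swapping `i` and `j` injects the strings with `x i = 1, x j = 0`
into those with `x i = 0, x j = 1`; the strings with both coordinates `1` count on both sides.
-/

open Finset

theorem card_filter_apply_le_of_comp_swap_mem {α : Type*} [DecidableEq α]
    (S : Finset (α → Bool)) (i j : α)
    (hS : ∀ x ∈ S, x i = true → x j = false → x ∘ Equiv.swap i j ∈ S) :
    #(S.filter (· i = true)) ≤ #(S.filter (· j = true)) := by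
  have hsplit : ∀ (p q : (α → Bool) → Prop) [DecidablePred p] [DecidablePred q],
      #(S.filter p) = #(S.filter fun x => p x ∧ q x) + #(S.filter fun x => p x ∧ ¬q x) := by
    intro p q _ _
    rw [← filter_filter, ← filter_filter, card_filter_add_card_filter_not]
  rw [hsplit (· i = true) (· j = true), hsplit (· j = true) (· i = true)]
  have hinj : #(S.filter fun x => x i = true ∧ ¬x j = true)
      ≤ #(S.filter fun x => x j = true ∧ ¬x i = true) := by
    refine card_le_card_of_injOn (· ∘ Equiv.swap i j) ?_ ?_
    · intro x hx
      simp only [coe_filter, Set.mem_ofPred_eq, Bool.not_eq_true] at hx ⊢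
      obtain ⟨hxS, hxi, hxj⟩ := hx
      simp [hS x hxS hxi hxj, hxi, hxj]
    · exact fun x _ y _ hxy => (Equiv.swap i j).surjective.injective_comp_right hxy
  have hboth : (S.filter fun x => x i = true ∧ x j = true)
      = S.filter fun x => x j = true ∧ x i = true := by
    simp only [and_comm]
  rw [hboth]
  exact Nat.add_le_add_left hinj _

theorem bval_comp_swap_add {n : ℕ} (x : Fin n → Bool) {i j : Fin n}
    (hi : x i = true) (hj : x j = false) :
    bval (x ∘ Equiv.swap i j) + 2 ^ (n - 1 - i.val) = bval x + 2 ^ (n - 1 - j.val) := by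
  have hij : i ≠ j := by rintro rfl; simp_all
  have hrest : ∀ k ∈ (univ.erase i).erase j, (x ∘ Equiv.swap i j) k = x k := by
    intro k hk
    simp only [mem_erase] at hk
    simp [Equiv.swap_apply_of_ne_of_ne hk.2.1 hk.1]
  unfold bval
  rw [← add_sum_erase _ _ (mem_univ i), ← add_sum_erase _ _ (mem_univ i),
    ← add_sum_erase _ _ (mem_erase.mpr ⟨hij.symm, mem_univ j⟩),
    ← add_sum_erase _ _ (mem_erase.mpr ⟨hij.symm, mem_univ j⟩),
    sum_congr rfl fun k hk => by rw [hrest k hk]]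
  simp only [Function.comp_apply, Equiv.swap_apply_left, Equiv.swap_apply_right, hi, hj,
    Bool.false_eq_true, ↓reduceIte, zero_add]
  ring

theorem comp_swap_mem_initSeg {n a : ℕ} {i j : Fin n} (hij : i ≤ j) (x : Fin n → Bool)
    (hx : x ∈ initSeg n a) (hi : x i = true) (hj : x j = false) :
    x ∘ Equiv.swap i j ∈ initSeg n a := by
  simp only [initSeg, mem_filter, mem_univ, true_and] at hx ⊢
  have hpow : 2 ^ (n - 1 - j.val) ≤ 2 ^ (n - 1 - i.val) :=
    Nat.pow_le_pow_right two_pos (by omega)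
  have := bval_comp_swap_add x hi hj
  omega

theorem stmt_1_general (n a : ℕ) (i j : Fin n) (hij : i ≤ j) :
    mCount (initSeg n a) i ≤ mCount (initSeg n a) j :=
  card_filter_apply_le_of_comp_swap_mem _ i j (comp_swap_mem_initSeg hij)

theorem stmt_1 (n a : ℕ) (ha : a ≤ 2 ^ n) (i j : Fin n) (hij : i ≤ j) :
    mCount (initSeg n a) i ≤ mCount (initSeg n a) j :=
  stmt_1_general n a i j hij
end

section
/- For a < 2^n and initial segments in Q_{n+1}: m_j(I_{2a+1}) = m_{j+1}(I_a) + m_{j+1}(I_{a+1}) for j ≤ n−1, and m_n(I_{2a+1}) = a. -/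
open Finset

theorem card_filter_eq_sum_snoc {α : Type*} [Fintype α] {n : ℕ} (p : (Fin (n + 1) → α) → Prop)
    [DecidablePred p] :
    #{x | p x} = ∑ b : α, #{y : Fin n → α | p (Fin.snoc y b)} := by
  simp only [card_filter]
  rw [← Fintype.sum_prod_type', ← Fintype.sum_equiv (Fin.snocEquiv fun _ => α) _ _ (fun _ => rfl)]
  rfl

theorem card_filter_eq_sum_cons {α : Type*} [Fintype α] {n : ℕ} (p : (Fin (n + 1) → α) → Prop)
    [DecidablePred p] :
    #{x | p x} = ∑ b : α, #{y : Fin n → α | p (Fin.cons b y)} := by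
  simp only [card_filter]
  rw [← Fintype.sum_prod_type', ← Fintype.sum_equiv (Fin.consEquiv fun _ => α) _ _ (fun _ => rfl)]
  rfl

theorem bval_snoc {n : ℕ} (y : Fin n → Bool) (b : Bool) :
    bval (Fin.snoc y b : Fin (n + 1) → Bool) = 2 * bval y + b.toNat := by
  simp only [bval, Fin.sum_univ_castSucc, Fin.snoc_castSucc, Fin.snoc_last, Fin.val_last,
    Fin.val_castSucc, mul_sum]
  congr 1
  · refine sum_congr rfl fun i _ => ?_
    rw [show n + 1 - 1 - i.val = (n - 1 - i.val) + 1 by omega, pow_succ]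
    split <;> ring
  · cases b <;> simp

theorem bval_cons {n : ℕ} (y : Fin n → Bool) (b : Bool) :
    bval (Fin.cons b y : Fin (n + 1) → Bool) = b.toNat * 2 ^ n + bval y := by
  simp only [bval, Fin.sum_univ_succ, Fin.cons_zero, Fin.cons_succ, Fin.val_zero, Fin.val_succ]
  congr 1
  · cases b <;> simp
  · refine sum_congr rfl fun i _ => ?_
    rw [show n + 1 - 1 - (i.val + 1) = n - 1 - i.val by omega]

theorem mCount_initSeg {n : ℕ} (c : ℕ) (j : Fin n) :
    mCount (initSeg n c) j = #{x | bval x < c ∧ x j = true} := by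
  rw [mCount, initSeg, filter_filter]

theorem card_initSeg {n c : ℕ} (hc : c ≤ 2 ^ n) : #(initSeg n c) = c := by
  induction n generalizing c with
  | zero =>
    interval_cases c <;> decide
  | succ n ih =>
    rw [initSeg, card_filter_eq_sum_snoc, Fintype.sum_bool]
    simp only [bval_snoc, Bool.toNat_true, Bool.toNat_false]
    have hodd (y : Fin n → Bool) : 2 * bval y + 1 < c ↔ bval y < c / 2 := by omega
    have heven (y : Fin n → Bool) : 2 * bval y + 0 < c ↔ bval y < (c + 1) / 2 := by omega
    rw [pow_succ] at hc
    simp only [hodd, heven]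
    rw [← initSeg, ← initSeg, ih (by omega), ih (by omega)]
    omega

theorem mCount_initSeg_succ {n c : ℕ} (hc : c ≤ 2 ^ n) (j : Fin n) :
    mCount (initSeg (n + 1) c) j.succ = mCount (initSeg n c) j := by
  rw [mCount_initSeg, mCount_initSeg, card_filter_eq_sum_cons, Fintype.sum_bool]
  simp only [bval_cons, Fin.cons_succ, Bool.toNat_true, Bool.toNat_false, zero_mul, zero_add]
  rw [filter_false_of_mem fun y _ => by omega, card_empty, zero_add]

theorem mCount_initSeg_two_mul_add_one_castSucc {n : ℕ} (a : ℕ) (j : Fin n) :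
    mCount (initSeg (n + 1) (2 * a + 1)) j.castSucc =
      mCount (initSeg n a) j + mCount (initSeg n (a + 1)) j := by
  rw [mCount_initSeg, mCount_initSeg, mCount_initSeg, card_filter_eq_sum_snoc, Fintype.sum_bool]
  simp only [bval_snoc, Fin.snoc_castSucc, Bool.toNat_true, Bool.toNat_false]
  congr 2 <;> refine filter_congr fun y _ => and_congr_left' ?_ <;> omega

theorem mCount_initSeg_two_mul_add_one_last {n : ℕ} (a : ℕ) :
    mCount (initSeg (n + 1) (2 * a + 1)) (Fin.last n) = #(initSeg n a) := by
  rw [mCount_initSeg, card_filter_eq_sum_snoc, Fintype.sum_bool]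
  simp [bval_snoc, initSeg]

theorem stmt_13 (n a : ℕ) (ha : a < 2 ^ n) :
    (∀ j : Fin (n + 1), (hj : j.val < n) →
      mCount (initSeg (n + 1) (2 * a + 1)) j =
        mCount (initSeg (n + 1) a) ⟨j.val + 1, by omega⟩ +
          mCount (initSeg (n + 1) (a + 1)) ⟨j.val + 1, by omega⟩) ∧
    mCount (initSeg (n + 1) (2 * a + 1)) ⟨n, by omega⟩ = a := by
  refine ⟨fun j hj => ?_, ?_⟩
  · obtain ⟨i, rfl⟩ : ∃ i : Fin n, j = i.castSucc := ⟨⟨j, hj⟩, rfl⟩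
    rw [mCount_initSeg_two_mul_add_one_castSucc, ← mCount_initSeg_succ ha.le,
      ← mCount_initSeg_succ ha]
    rfl
  · exact (mCount_initSeg_two_mul_add_one_last a).trans (card_initSeg ha.le)
end

section
/- The sequence t_n defined by t_4 = 24 and t_n = 2·t_{n−1} + Σ_{j=4}^{n−2} 2^{n−2−j}·t_j + 6·(4^{n−2} − (n−1)·2^{n−2}) for n ≥ 5 has closed form t_n = 4^n − 4·3^n + 6·2^n − 4 for all n ≥ 4. -/
/-! Subtracting twice the recurrence at `n` from the one at `n + 1` eliminates the sum and leaves
the second-order recurrence `t (n+1) = 4 t n - 3 t (n-1) + 12·4^(n-2) - 6·2^(n-1)` for `n ≥ 5`.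
The closed form satisfies it, and agrees with `t` at `n = 4, 5`. -/

lemma sum_Icc_pow_mul_succ_top {R : Type*} [CommSemiring R] (r : R) (u : ℕ → R) {a m : ℕ}
    (h : a ≤ m + 1) :
    ∑ j ∈ Finset.Icc a (m + 1), r ^ (m + 1 - j) * u j =
      r * ∑ j ∈ Finset.Icc a m, r ^ (m - j) * u j + u (m + 1) := by
  rw [Finset.sum_Icc_succ_top h, Nat.sub_self, pow_zero, one_mul, Finset.mul_sum]
  congr 1
  refine Finset.sum_congr rfl fun j hj => ?_
  rw [Nat.succ_sub (Finset.mem_Icc.mp hj).2, pow_succ]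
  ring

lemma eq_four_mul_sub_three_mul_of_rec (t : ℕ → ℤ)
    (hrec : ∀ n : ℕ, 5 ≤ n →
      t n = 2 * t (n - 1) + ∑ j ∈ Finset.Icc 4 (n - 2), 2 ^ (n - 2 - j) * t j +
        6 * (4 ^ (n - 2) - ((n : ℤ) - 1) * 2 ^ (n - 2))) (m : ℕ) :
    t (m + 6) = 4 * t (m + 5) - 3 * t (m + 4) + 12 * 4 ^ (m + 3) - 6 * 2 ^ (m + 4) := by
  have h6 := hrec (m + 6) (by omega)
  have h5 := hrec (m + 5) (by omega)
  simp only [show m + 6 - 1 = m + 5 by omega, show m + 6 - 2 = m + 3 + 1 by omega,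
    show m + 5 - 1 = m + 4 by omega, show m + 5 - 2 = m + 3 by omega] at h6 h5
  rw [sum_Icc_pow_mul_succ_top 2 t (by omega)] at h6
  push_cast at h5 h6
  linear_combination h6 - 2 * h5

theorem stmt_19 (t : ℕ → ℤ) (h4 : t 4 = 24)
    (hrec : ∀ n : ℕ, 5 ≤ n →
      t n = 2 * t (n - 1) + ∑ j ∈ Finset.Icc 4 (n - 2), 2 ^ (n - 2 - j) * t j +
        6 * (4 ^ (n - 2) - ((n : ℤ) - 1) * 2 ^ (n - 2))) :
    ∀ n : ℕ, 4 ≤ n → t n = 4 ^ n - 4 * 3 ^ n + 6 * 2 ^ n - 4 := by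
  have h5 : t 5 = 240 := by
    simpa [h4] using hrec 5 le_rfl
  have key (m : ℕ) : t (m + 4) = 4 ^ (m + 4) - 4 * 3 ^ (m + 4) + 6 * 2 ^ (m + 4) - 4 := by
    induction m using Nat.twoStepInduction with
    | zero => rw [h4]; norm_num
    | one => rw [h5]; norm_num
    | more m ih₀ ih₁ =>
      rw [eq_four_mul_sub_three_mul_of_rec t hrec, ih₀, ih₁]
      ring
  intro n hn
  obtain ⟨m, rfl⟩ := Nat.exists_eq_add_of_le' hn
  exact key m
end
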